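/- arXiv:0805.1875 — 3 statements merged into one kernel-verified Lean document; each statement's English description precedes it below -/
import Mathlib

section
/- Let G be a finite tree (a finite connected acyclic simple graph), let B be a subset of its vertex set, and let N assign to each vertex a positive integer such that for every vertex v not in B, N(v) divides the sum of N(w) over all vertices w adjacent to v. Let v₀, v₁, …, v_r be a path in G such that v₀ is a leaf (degree 1) with v₀ ∉ B, and such that every intermediate vertex v_j with 1 ≤ j ≤ r−1 has degree 2 in G and satisfies v_j ∉ B. Then N(v₀) divides N(v_j) for every j with 0 ≤ j ≤ r. -/
/-!
Walk along the path from the leaf. At the leaf `v₀` Loeser's congruence reads `N v₀ ∣ N v₁`. At an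
interior vertex `a` of degree two, with predecessor `p` and successor `c`, it reads
`N a ∣ N p + N c`; so if `d` divides `N p` and `N a`, it divides `N c`. Thus `N v₀` divides any two
consecutive weights of the path, and hence all of them.
-/

namespace SimpleGraph

variable {V : Type*} [Fintype V] (G : SimpleGraph V) [DecidableRel G.Adj]

lemma neighborFinset_eq_singleton_of_degree_eq_one {a c : V} (hdeg : G.degree a = 1)
    (hc : G.Adj a c) : G.neighborFinset a = {c} := by
  refine (Finset.eq_of_subset_of_card_le ?_ ?_).symm
  · simpa using hc
  · rw [card_neighborFinset_eq_degree, hdeg, Finset.card_singleton]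

lemma neighborFinset_eq_pair_of_degree_eq_two [DecidableEq V] {a p c : V} (hdeg : G.degree a = 2)
    (hp : G.Adj a p) (hc : G.Adj a c) (hpc : p ≠ c) : G.neighborFinset a = {p, c} := by
  refine (Finset.eq_of_subset_of_card_le ?_ ?_).symm
  · simp [Finset.insert_subset_iff, hp, hc]
  · rw [card_neighborFinset_eq_degree, hdeg, Finset.card_pair hpc]

variable {G} {N : V → ℕ}

lemma dvd_of_degree_eq_one {a c : V} (hdeg : G.degree a = 1) (hc : G.Adj a c)
    (hcong : N a ∣ ∑ w ∈ G.neighborFinset a, N w) : N a ∣ N c := by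
  rwa [G.neighborFinset_eq_singleton_of_degree_eq_one hdeg hc, Finset.sum_singleton] at hcong

lemma dvd_of_degree_eq_two {d : ℕ} {a p c : V} (hdeg : G.degree a = 2) (hp : G.Adj a p)
    (hc : G.Adj a c) (hpc : p ≠ c) (hcong : N a ∣ ∑ w ∈ G.neighborFinset a, N w)
    (hda : d ∣ N a) (hdp : d ∣ N p) : d ∣ N c := by
  classical
  rw [G.neighborFinset_eq_pair_of_degree_eq_two hdeg hp hc hpc, Finset.sum_pair hpc] at hcong
  exact (Nat.dvd_add_right hdp).mp (hda.trans hcong)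

theorem dvd_of_mem_support_of_isPath {d : ℕ} {p b : V} (w : G.Walk p b) (hw : w.IsPath)
    (hmid : ∀ x ∈ w.support, x ≠ p → x ≠ b →
      G.degree x = 2 ∧ N x ∣ ∑ y ∈ G.neighborFinset x, N y)
    (hp : d ∣ N p) (hsnd : d ∣ N w.snd) : ∀ x ∈ w.support, d ∣ N x := by
  induction w with
  | nil => simpa using hp
  | @cons p c b hpc w' ih =>
    have hp' : p ∉ w'.support := (Walk.cons_isPath_iff hpc w').mp hw |>.2
    have hc : d ∣ N c := by simpa using hsnd
    have hmid' : ∀ x ∈ w'.support, x ≠ c → x ≠ b →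
        G.degree x = 2 ∧ N x ∣ ∑ y ∈ G.neighborFinset x, N y := fun x hx _ =>
      hmid x (by simp [hx]) (ne_of_mem_of_not_mem hx hp')
    have hsnd' : d ∣ N w'.snd := by
      cases w' with
      | nil => simpa using hc
      | @cons c e b hce w'' =>
        have hcb : c ≠ b := fun h => ((Walk.cons_isPath_iff hce w'').mp hw.of_cons).2
          (h ▸ w''.end_mem_support)
        have hpe : p ≠ e := fun h => hp' (by simp [h])
        obtain ⟨hdeg, hcong⟩ := hmid c (by simp) hpc.ne.symm hcb
        simpa using dvd_of_degree_eq_two hdeg hpc.symm hce hpe hcong hc hp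
    simpa [hp] using ih hw.of_cons hmid' hc hsnd'

end SimpleGraph

open SimpleGraph in
theorem tree_path_first_weight_dvd_general {V : Type*} [Fintype V]
    (G : SimpleGraph V) [DecidableRel G.Adj]
    (B : Set V) (N : V → ℕ)
    (hcong : ∀ v ∉ B, N v ∣ ∑ w ∈ G.neighborFinset v, N w)
    (v₀ u : V) (w : G.Walk v₀ u) (hw : w.IsPath)
    (hleaf : G.degree v₀ = 1) (hv₀B : v₀ ∉ B)
    (hmid : ∀ x ∈ w.support, x ≠ v₀ → x ≠ u → G.degree x = 2 ∧ x ∉ B) :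
    ∀ x ∈ w.support, N v₀ ∣ N x := by
  have hsnd : N v₀ ∣ N w.snd := by
    cases w with
    | nil => exact dvd_rfl
    | cons h _ => simpa using dvd_of_degree_eq_one hleaf h (hcong v₀ hv₀B)
  refine dvd_of_mem_support_of_isPath w hw (fun x hx hx₀ hxu => ?_) dvd_rfl hsnd
  obtain ⟨hdeg, hxB⟩ := hmid x hx hx₀ hxu
  exact ⟨hdeg, hcong x hxB⟩

/-- Let `G` be a finite tree, `B` a set of vertices, and `N` a positive-integer weight
on the vertices such that every vertex outside `B` satisfies Loeser's congruence:
its weight divides the sum of the weights of its neighbours. If `v₀, …, v_r` is a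
path (a walk with pairwise distinct vertices) whose starting vertex `v₀` is a leaf
not in `B` and all of whose intermediate vertices have degree `2` and lie outside `B`,
then `N v₀` divides the weight of every vertex of the path. -/
theorem tree_path_first_weight_dvd {V : Type*} [Fintype V]
    (G : SimpleGraph V) [DecidableRel G.Adj] (hT : G.IsTree)
    (B : Set V) (N : V → ℕ) (hpos : ∀ v, 0 < N v)
    (hcong : ∀ v ∉ B, N v ∣ ∑ w ∈ G.neighborFinset v, N w)
    (v₀ u : V) (w : G.Walk v₀ u) (hw : w.IsPath)
    (hleaf : G.degree v₀ = 1) (hv₀B : v₀ ∉ B)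
    (hmid : ∀ x ∈ w.support, x ≠ v₀ → x ≠ u → G.degree x = 2 ∧ x ∉ B) :
    ∀ x ∈ w.support, N v₀ ∣ N x :=
  tree_path_first_weight_dvd_general G B N hcong v₀ u w hw hleaf hv₀B hmid
end

section
/- Let G be a finite tree (a finite connected acyclic simple graph), let B be a subset of its vertex set, and let N assign to each vertex a positive integer such that for every vertex v not in B, N(v) divides the sum of N(w) over all vertices w adjacent to v. Let d ≥ 1 and suppose u and v are adjacent vertices with d ∣ N(u) and d ∣ N(v). Then there exists a vertex w of G with d ∣ N(w) such that w ∈ B or the degree of w in G is different from 2. -/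
/-!
Suppose no vertex with `d ∣ N w` lies in `B` or has degree different from `2`. A vertex `b` with
`d ∣ N b` then has exactly two neighbours `a, c`, and Loeser's congruence `N b ∣ N a + N c` shows
that `d ∣ N a` forces `d ∣ N c`. Starting from the edge `u v`, divisibility therefore propagates
along a non-backtracking walk, which in a tree moves strictly away from `u`. A finite tree has no
such infinite walk: an edge of the walk farthest from `u` cannot be extended.
-/

namespace SimpleGraph

variable {V : Type*} {G : SimpleGraph V}

lemma IsAcyclic.eq_of_adj_of_dist_add_one_eq (hG : G.IsAcyclic) {u a b c : V}
    (hab : G.Adj a b) (hcb : G.Adj c b)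
    (ha : G.dist u a + 1 = G.dist u b) (hc : G.dist u c + 1 = G.dist u b) : a = c := by
  classical
  have hreach : G.Reachable u b := Reachable.of_dist_ne_zero (by omega)
  obtain ⟨q, hq, -⟩ := hreach.exists_path_of_dist
  suffices key : ∀ x, G.Adj x b → G.dist u x + 1 = G.dist u b → x = q.penultimate from
    (key a hab ha).trans (key c hcb hc).symm
  intro x hxb hx
  refine hG.eq_penultimate_of_adj_end hq hxb.symm (by_contra fun hxq => ?_)
  obtain ⟨p, hp, hplen⟩ := (hreach.trans hxb.symm.reachable).exists_path_of_dist
  have hbp : b ∈ p.support := hG.mem_support_of_ne_mem_support_of_adj_of_isPath hp hq hxb hxq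
  have : G.dist u b ≤ p.length :=
    (dist_le (p.takeUntil b hbp)).trans (p.length_takeUntil_le_length hbp)
  omega

lemma IsAcyclic.dist_eq_add_one_of_adj_of_ne (hG : G.IsAcyclic) {u a b c : V}
    (hab : G.Adj a b) (hbc : G.Adj b c) (hca : c ≠ a) (ha : G.dist u a + 1 = G.dist u b) :
    G.dist u c = G.dist u b + 1 := by
  have hreach : G.Reachable u b := Reachable.of_dist_ne_zero (by omega)
  rcases hG.dist_eq_dist_add_one_of_adj_of_reachable u hbc hreach with h | h
  · exact absurd (hG.eq_of_adj_of_dist_add_one_eq hab hbc.symm ha h.symm) hca.symm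
  · exact h

theorem IsAcyclic.not_of_adj_of_forall_exists_adj_ne [Finite V] (hG : G.IsAcyclic)
    {P : V → Prop} (hext : ∀ a b, G.Adj a b → P a → P b → ∃ c, G.Adj b c ∧ c ≠ a ∧ P c)
    {u v : V} (huv : G.Adj u v) (hu : P u) : ¬ P v := by
  intro hv
  let outward : Set (V × V) :=
    {e | G.Adj e.1 e.2 ∧ P e.1 ∧ P e.2 ∧ G.dist u e.1 + 1 = G.dist u e.2}
  have huv_mem : (u, v) ∈ outward := ⟨huv, hu, hv, by simp [dist_eq_one_iff_adj.mpr huv]⟩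
  obtain ⟨⟨a, b⟩, ⟨hab, ha, hb, hdist⟩, hmax⟩ :=
    outward.exists_max_image (fun e => G.dist u e.2) outward.toFinite ⟨_, huv_mem⟩
  dsimp only at hab ha hb hdist hmax
  obtain ⟨c, hbc, hca, hc⟩ := hext a b hab ha hb
  have hc_far := hG.dist_eq_add_one_of_adj_of_ne hab hbc hca hdist
  have : G.dist u c ≤ G.dist u b := hmax (b, c) ⟨hbc, hb, hc, hc_far.symm⟩
  omega

lemma exists_neighborFinset_eq_pair_of_degree_eq_two [DecidableEq V] {a b : V}
    [Fintype (G.neighborSet b)] (hdeg : G.degree b = 2) (hba : G.Adj b a) :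
    ∃ c, c ≠ a ∧ G.neighborFinset b = {a, c} := by
  obtain ⟨x, y, hxy, hxy_eq⟩ := Finset.card_eq_two.mp hdeg
  have ha : a ∈ ({x, y} : Finset V) := hxy_eq ▸ (mem_neighborFinset G b a).mpr hba
  rcases Finset.mem_insert.mp ha with rfl | ha
  · exact ⟨y, hxy.symm, hxy_eq⟩
  · rw [Finset.mem_singleton.mp ha]
    exact ⟨x, hxy, hxy_eq.trans (Finset.pair_comm _ _)⟩

end SimpleGraph

open SimpleGraph in
theorem tree_dvd_adjacent_reaches_special_general {V : Type*} [Fintype V]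
    (G : SimpleGraph V) [DecidableRel G.Adj] (hT : G.IsTree)
    (B : Set V) (N : V → ℕ)
    (hcong : ∀ v ∉ B, N v ∣ ∑ w ∈ G.neighborFinset v, N w)
    (d : ℕ) (u v : V) (huv : G.Adj u v)
    (hdu : d ∣ N u) (hdv : d ∣ N v) :
    ∃ w : V, d ∣ N w ∧ (w ∈ B ∨ G.degree w ≠ 2) := by
  classical
  by_contra! hcon
  refine hT.isAcyclic.not_of_adj_of_forall_exists_adj_ne (P := fun w => d ∣ N w) ?_ huv hdu hdv
  intro a b hab ha hb
  obtain ⟨hbB, hdeg⟩ := hcon b hb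
  obtain ⟨c, hca, hnb⟩ := exists_neighborFinset_eq_pair_of_degree_eq_two hdeg hab.symm
  have hbc : G.Adj b c := (mem_neighborFinset G b c).mp (by simp [hnb])
  have hsum : N b ∣ N a + N c := by
    simpa [hnb, Finset.sum_pair hca.symm] using hcong b hbB
  exact ⟨c, hbc, hca, (Nat.dvd_add_right ha).mp (hb.trans hsum)⟩

/-- Let `G` be a finite tree, `B` a set of vertices, and `N` a positive-integer weight
on the vertices such that every vertex outside `B` satisfies Loeser's congruence:
its weight divides the sum of the weights of its neighbours. If `d ≥ 1` divides the
weights of two adjacent vertices, then there is a vertex `w` with `d ∣ N w` such that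
`w ∈ B` or the degree of `w` is different from `2`. -/
theorem tree_dvd_adjacent_reaches_special {V : Type*} [Fintype V]
    (G : SimpleGraph V) [DecidableRel G.Adj] (hT : G.IsTree)
    (B : Set V) (N : V → ℕ) (hpos : ∀ v, 0 < N v)
    (hcong : ∀ v ∉ B, N v ∣ ∑ w ∈ G.neighborFinset v, N w)
    (d : ℕ) (hd : 1 ≤ d) (u v : V) (huv : G.Adj u v)
    (hdu : d ∣ N u) (hdv : d ∣ N v) :
    ∃ w : V, d ∣ N w ∧ (w ∈ B ∨ G.degree w ≠ 2) :=
  tree_dvd_adjacent_reaches_special_general G hT B N hcong d u v huv hdu hdv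
end

section
/- Let G be a finite tree (a finite connected acyclic simple graph) having at least one vertex of degree ≥ 3, let B be a subset of its vertex set, and let N assign to each vertex a positive integer such that for every vertex v not in B, N(v) divides the sum of N(w) over all vertices w adjacent to v. Let d ≥ 1 and assume that d does not divide N(w) for any vertex w ∈ B and does not divide N(w) for any vertex w of degree ≥ 3. Then: (1) every vertex v with d ∣ N(v) has degree exactly 2 in G and lies outside B; and (2) no two adjacent vertices u, v satisfy both d ∣ N(u) and d ∣ N(v). -/
/-!
Call a vertex *marked* when `d` divides its weight. A marked vertex lies outside `B` and has
degree at most `2`, and Loeser's congruence makes `d` divide the sum of its neighbours' weights.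
So if a marked vertex has a marked neighbour, its other neighbour (if any) is marked as well, and
the property "marked with a marked neighbour" spreads along every edge. In a connected graph it
would reach a vertex of degree `≥ 3`, which is unmarked; hence no two marked vertices are adjacent.
A marked leaf would have its unique neighbour marked, and a marked isolated vertex is impossible
in a connected graph that also has an unmarked vertex, so marked vertices have degree exactly `2`.
-/

namespace SimpleGraph

variable {V : Type*} {G : SimpleGraph V}

theorem Reachable.of_forall_adj_imp {P : V → Prop} (hP : ∀ x y, G.Adj x y → P x → P y)
    {u v : V} (huv : G.Reachable u v) (hu : P u) : P v := by
  obtain ⟨p⟩ := huv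
  induction p with
  | nil => exact hu
  | cons h _ ih => exact ih (hP _ _ h hu)

variable [G.LocallyFinite]

theorem neighborFinset_eq_pair_of_degree_le_two [DecidableEq V] {x y z : V} (hx : G.degree x ≤ 2)
    (hxy : G.Adj x y) (hxz : G.Adj x z) (hyz : y ≠ z) : G.neighborFinset x = {y, z} := by
  refine (Finset.eq_of_subset_of_card_le ?_ ?_).symm
  · simp [Finset.insert_subset_iff, hxy, hxz]
  · rwa [Finset.card_pair hyz, card_neighborFinset_eq_degree]

theorem exists_neighborFinset_eq_singleton_of_degree_eq_one {v : V} (hv : G.degree v = 1) :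
    ∃ w, G.Adj v w ∧ G.neighborFinset v = {w} := by
  obtain ⟨w, hw⟩ := Finset.card_eq_one.1 ((card_neighborFinset_eq_degree G v).trans hv)
  exact ⟨w, (mem_neighborFinset G v w).1 (hw ▸ Finset.mem_singleton_self w), hw⟩

theorem dvd_of_adj_of_dvd_sum_neighborFinset {N : V → ℕ} {d : ℕ} {x y z : V}
    (hx : G.degree x ≤ 2) (hsum : d ∣ ∑ w ∈ G.neighborFinset x, N w)
    (hxy : G.Adj x y) (hxz : G.Adj x z) (hy : d ∣ N y) : d ∣ N z := by
  classical
  obtain rfl | hyz := eq_or_ne y z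
  · exact hy
  rw [neighborFinset_eq_pair_of_degree_le_two hx hxy hxz hyz, Finset.sum_pair hyz] at hsum
  exact (Nat.dvd_add_right hy).1 hsum

theorem Preconnected.dvd_of_adj_dvd {N : V → ℕ} {d : ℕ} (hG : G.Preconnected)
    (hmarked : ∀ v, d ∣ N v → G.degree v ≤ 2 ∧ d ∣ ∑ w ∈ G.neighborFinset v, N w)
    {u v : V} (huv : G.Adj u v) (hu : d ∣ N u) (hv : d ∣ N v) (x : V) : d ∣ N x := by
  let P : V → Prop := fun x => d ∣ N x ∧ ∃ y, G.Adj x y ∧ d ∣ N y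
  have hspread : ∀ x z, G.Adj x z → P x → P z := by
    rintro x z hxz ⟨hx, y, hxy, hy⟩
    have hz := dvd_of_adj_of_dvd_sum_neighborFinset (hmarked x hx).1 (hmarked x hx).2 hxy hxz hy
    exact ⟨hz, x, hxz.symm, hx⟩
  exact ((hG u x).of_forall_adj_imp hspread ⟨hu, v, huv, hv⟩).1

end SimpleGraph

open SimpleGraph in
theorem tree_dvd_weights_deg_two_nonadjacent_general {V : Type*} [Fintype V]
    (G : SimpleGraph V) [DecidableRel G.Adj] (hT : G.IsTree)
    (hbranch : ∃ v, 3 ≤ G.degree v)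
    (B : Set V) (N : V → ℕ)
    (hcong : ∀ v ∉ B, N v ∣ ∑ w ∈ G.neighborFinset v, N w)
    (d : ℕ)
    (hB : ∀ w ∈ B, ¬ d ∣ N w)
    (hdeg : ∀ w : V, 3 ≤ G.degree w → ¬ d ∣ N w) :
    (∀ v : V, d ∣ N v → G.degree v = 2 ∧ v ∉ B) ∧
      (∀ u v : V, G.Adj u v → ¬ (d ∣ N u ∧ d ∣ N v)) := by
  obtain ⟨b, hb⟩ := hbranch
  have hG := hT.connected.preconnected
  have hnotB : ∀ v, d ∣ N v → v ∉ B := fun v hv hvB => hB v hvB hv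
  have hmarked : ∀ v, d ∣ N v → G.degree v ≤ 2 ∧ d ∣ ∑ w ∈ G.neighborFinset v, N w :=
    fun v hv => ⟨not_lt.1 fun h => hdeg v h hv, hv.trans (hcong v (hnotB v hv))⟩
  have hnonadj : ∀ u v, G.Adj u v → ¬ (d ∣ N u ∧ d ∣ N v) :=
    fun u v huv ⟨hu, hv⟩ => hdeg b hb (hG.dvd_of_adj_dvd hmarked huv hu hv b)
  refine ⟨fun v hv => ⟨?_, hnotB v hv⟩, hnonadj⟩
  have hvb : v ≠ b := by rintro rfl; exact hdeg v hb hv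
  have hdeg_pos : 0 < G.degree v := (hG v b).degree_pos_left hvb
  have hne1 : G.degree v ≠ 1 := by
    intro h1
    obtain ⟨w, hvw, hw⟩ := exists_neighborFinset_eq_singleton_of_degree_eq_one h1
    have hsum := (hmarked v hv).2
    rw [hw, Finset.sum_singleton] at hsum
    exact hnonadj v w hvw ⟨hv, hsum⟩
  have := (hmarked v hv).1
  omega

/-- Combinatorial core of the holomorphy conjecture for ideals in `ℂ[x,y]`:
let `G` be a finite tree having a vertex of degree `≥ 3`, `B` a set of vertices, and
`N` a positive-integer weight on the vertices such that every vertex outside `B`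
satisfies Loeser's congruence (its weight divides the sum of the weights of its
neighbours). If `d ≥ 1` divides neither the weight of any vertex of `B` nor the
weight of any vertex of degree `≥ 3`, then every vertex whose weight is divisible
by `d` has degree exactly `2` and lies outside `B`, and no two adjacent vertices
both have weight divisible by `d`. -/
theorem tree_dvd_weights_deg_two_nonadjacent {V : Type*} [Fintype V]
    (G : SimpleGraph V) [DecidableRel G.Adj] (hT : G.IsTree)
    (hbranch : ∃ v, 3 ≤ G.degree v)
    (B : Set V) (N : V → ℕ) (hpos : ∀ v, 0 < N v)
    (hcong : ∀ v ∉ B, N v ∣ ∑ w ∈ G.neighborFinset v, N w)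
    (d : ℕ) (hd : 1 ≤ d)
    (hB : ∀ w ∈ B, ¬ d ∣ N w)
    (hdeg : ∀ w : V, 3 ≤ G.degree w → ¬ d ∣ N w) :
    (∀ v : V, d ∣ N v → G.degree v = 2 ∧ v ∉ B) ∧
      (∀ u v : V, G.Adj u v → ¬ (d ∣ N u ∧ d ∣ N v)) :=
  tree_dvd_weights_deg_two_nonadjacent_general G hT hbranch B N hcong d hB hdeg
end
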